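/- arXiv:1407.1258 — 2 statements merged into one kernel-verified Lean document; each statement's English description precedes it below -/
import Mathlib

section
/- Let C ≠ 0, a, b be real constants and set f(u) = C·(u+b)^(2−4a), defined for u+b > 0. Let u(t,x) be a smooth real-valued solution of the gKN equation with f, such that u_x(t,x) ≠ 0 and u(t,x)+b > 0 for all (t,x). Then the function P(t,x) = (u(t,x)+b) − 3at·u_t(t,x) − ax·u_x(t,x) satisfies the symmetry determining equation ∂_t P − ∂_x³ P + 3(u_xx/u_x)∂_x² P − (3/2)(u_xx²/u_x²)∂_x P + (f(u)/u_x²)∂_x P − (f'(u)/u_x)P = 0 at every point (t,x). (This is the point symmetry X_{3b} = 3at∂_t + ax∂_x + (u+b)∂_u of the gKN equation.) -/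
open Real

/-- Partial derivative with respect to the second (spatial) variable. -/
noncomputable def pdx (u : ℝ → ℝ → ℝ) : ℝ → ℝ → ℝ := fun t x => deriv (fun y => u t y) x

/-- Partial derivative with respect to the first (time) variable. -/
noncomputable def pdt (u : ℝ → ℝ → ℝ) : ℝ → ℝ → ℝ := fun t x => deriv (fun s => u s x) t

/-- `u` solves the generalized Krichever-Novikov equation with nonlinearity `f`:
`u_t = u_xxx - (3/2) u_xx^2/u_x + f(u)/u_x`. -/
def isGKN (f : ℝ → ℝ) (u : ℝ → ℝ → ℝ) : Prop :=
  ∀ t x, pdt u t x =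
    pdx (pdx (pdx u)) t x - (3/2) * (pdx (pdx u) t x)^2 / pdx u t x + f (u t x) / pdx u t x

/-- The symmetry determining equation for a characteristic function `P` along `u`:
`∂_t P - ∂_x^3 P + 3 (u_xx/u_x) ∂_x^2 P - (3/2)(u_xx^2/u_x^2) ∂_x P + (f(u)/u_x^2) ∂_x P
 - (f'(u)/u_x) P = 0`. -/
def symmDet (f : ℝ → ℝ) (u P : ℝ → ℝ → ℝ) : Prop :=
  ∀ t x,
    pdt P t x - pdx (pdx (pdx P)) t x
      + 3 * (pdx (pdx u) t x / pdx u t x) * pdx (pdx P) t x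
      - (3/2) * ((pdx (pdx u) t x)^2 / (pdx u t x)^2) * pdx P t x
      + (f (u t x) / (pdx u t x)^2) * pdx P t x
      - (deriv f (u t x) / pdx u t x) * P t x = 0

/-! The point symmetry `X₃b` generates the scalings `(t, x, u + b) ↦ (λ^(3a) t, λ^a x, λ (u + b))`.
Write `S = 3at ∂_t + ax ∂_x`, so that `P = (u + b) - S u`. Since `[∂_x, S] = a ∂_x` and
`[∂_t, S] = 3a ∂_t`, the derivatives of `P` keep this shape: `∂_xᵏ P = (1 - ka) ∂_xᵏ u - S ∂_xᵏ u`
and `∂_t P = (1 - 3a) u_t - S u_t`. In the determining equation the `S`-terms cancel, since they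
are `S` applied to the gKN equation itself, and the remaining terms cancel by the gKN equation
and the homogeneity `(u + b) f'(u) = (2 - 4a) f(u)`. -/

open Function

section PartialDerivatives

variable {v : ℝ → ℝ → ℝ} {t x : ℝ}

theorem hasDerivAt_pdx (hv : DifferentiableAt ℝ (uncurry v) (t, x)) :
    HasDerivAt (fun y => v t y) (pdx v t x) x :=
  (hv.comp x ((differentiableAt_const t).prodMk differentiableAt_id)).hasDerivAt

theorem hasDerivAt_pdt (hv : DifferentiableAt ℝ (uncurry v) (t, x)) :
    HasDerivAt (fun s => v s x) (pdt v t x) t :=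
  (hv.comp (f := fun s : ℝ => (s, x)) t
    (differentiableAt_id.prodMk (differentiableAt_const x))).hasDerivAt

theorem pdx_eq_fderiv (hv : DifferentiableAt ℝ (uncurry v) (t, x)) :
    pdx v t x = fderiv ℝ (uncurry v) (t, x) (0, 1) :=
  (hv.hasFDerivAt.comp_hasDerivAt x ((hasDerivAt_const x t).prodMk (hasDerivAt_id x))).deriv

theorem pdt_eq_fderiv (hv : DifferentiableAt ℝ (uncurry v) (t, x)) :
    pdt v t x = fderiv ℝ (uncurry v) (t, x) (1, 0) :=
  (hv.hasFDerivAt.comp_hasDerivAt (l := uncurry v) t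
    ((hasDerivAt_id t).prodMk (hasDerivAt_const t x))).deriv

theorem hasDerivAt_comp_line (hv : DifferentiableAt ℝ (uncurry v) (t, x)) (v₁ v₂ : ℝ) :
    HasDerivAt (fun ε => v (t + ε * v₁) (x + ε * v₂)) (v₁ * pdt v t x + v₂ * pdx v t x) 0 := by
  have hline : HasDerivAt (fun ε : ℝ => (t + ε * v₁, x + ε * v₂)) (v₁, v₂) 0 := by
    refine ((hasDerivAt_mul_const v₁).const_add t).prodMk ?_
    simpa using (hasDerivAt_mul_const v₂).const_add x
  have hdir : fderiv ℝ (uncurry v) (t, x) (v₁, v₂) = v₁ * pdt v t x + v₂ * pdx v t x := by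
    rw [pdt_eq_fderiv hv, pdx_eq_fderiv hv, ← smul_eq_mul, ← smul_eq_mul, ← map_smul, ← map_smul,
      ← map_add]
    simp
  rw [← hdir]
  have hv0 : HasFDerivAt (uncurry v) (fderiv ℝ (uncurry v) (t, x)) (t + 0 * v₁, x + 0 * v₂) := by
    simpa using hv.hasFDerivAt
  exact hv0.comp_hasDerivAt (l := uncurry v) 0 hline

theorem uncurry_pdx (hv : Differentiable ℝ (uncurry v)) :
    uncurry (pdx v) = fun p => fderiv ℝ (uncurry v) p (0, 1) :=
  funext fun p => pdx_eq_fderiv (hv p)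

theorem uncurry_pdt (hv : Differentiable ℝ (uncurry v)) :
    uncurry (pdt v) = fun p => fderiv ℝ (uncurry v) p (1, 0) :=
  funext fun p => pdt_eq_fderiv (hv p)

variable {m n : WithTop ℕ∞}

theorem contDiff_pdx (hv : ContDiff ℝ n (uncurry v)) (hmn : m + 1 ≤ n) :
    ContDiff ℝ m (uncurry (pdx v)) := by
  rw [uncurry_pdx (hv.differentiable (ne_bot_of_le_ne_bot (by simp) hmn))]
  exact (ContinuousLinearMap.apply ℝ ℝ ((0 : ℝ), (1 : ℝ))).contDiff.comp (hv.fderiv_right hmn)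

theorem contDiff_pdt (hv : ContDiff ℝ n (uncurry v)) (hmn : m + 1 ≤ n) :
    ContDiff ℝ m (uncurry (pdt v)) := by
  rw [uncurry_pdt (hv.differentiable (ne_bot_of_le_ne_bot (by simp) hmn))]
  exact (ContinuousLinearMap.apply ℝ ℝ ((1 : ℝ), (0 : ℝ))).contDiff.comp (hv.fderiv_right hmn)

theorem fderiv_uncurry_pdx (hv : ContDiff ℝ 2 (uncurry v)) (p d : ℝ × ℝ) :
    fderiv ℝ (uncurry (pdx v)) p d = fderiv ℝ (fderiv ℝ (uncurry v)) p d (0, 1) := by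
  have hv' := (hv.fderiv_right (m := 1) le_rfl).differentiable one_ne_zero p
  have happly : HasFDerivAt (fun q => fderiv ℝ (uncurry v) q ((0 : ℝ), (1 : ℝ)))
      ((ContinuousLinearMap.apply ℝ ℝ ((0 : ℝ), (1 : ℝ))).comp
        (fderiv ℝ (fderiv ℝ (uncurry v)) p)) p :=
    (ContinuousLinearMap.apply ℝ ℝ ((0 : ℝ), (1 : ℝ))).hasFDerivAt.comp p hv'.hasFDerivAt
  rw [uncurry_pdx (hv.differentiable two_ne_zero), happly.fderiv]
  rfl

theorem fderiv_uncurry_pdt (hv : ContDiff ℝ 2 (uncurry v)) (p d : ℝ × ℝ) :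
    fderiv ℝ (uncurry (pdt v)) p d = fderiv ℝ (fderiv ℝ (uncurry v)) p d (1, 0) := by
  have hv' := (hv.fderiv_right (m := 1) le_rfl).differentiable one_ne_zero p
  have happly : HasFDerivAt (fun q => fderiv ℝ (uncurry v) q ((1 : ℝ), (0 : ℝ)))
      ((ContinuousLinearMap.apply ℝ ℝ ((1 : ℝ), (0 : ℝ))).comp
        (fderiv ℝ (fderiv ℝ (uncurry v)) p)) p :=
    (ContinuousLinearMap.apply ℝ ℝ ((1 : ℝ), (0 : ℝ))).hasFDerivAt.comp p hv'.hasFDerivAt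
  rw [uncurry_pdt (hv.differentiable two_ne_zero), happly.fderiv]
  rfl

theorem pdt_pdx_comm (hv : ContDiff ℝ 2 (uncurry v)) : pdt (pdx v) = pdx (pdt v) := by
  funext t x
  calc pdt (pdx v) t x = fderiv ℝ (uncurry (pdx v)) (t, x) (1, 0) :=
        pdt_eq_fderiv ((contDiff_pdx hv le_rfl).differentiable one_ne_zero _)
    _ = fderiv ℝ (fderiv ℝ (uncurry v)) (t, x) (0, 1) (1, 0) := by
        rw [fderiv_uncurry_pdx hv]
        exact hv.contDiffAt.isSymmSndFDerivAt (by simp) _ _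
    _ = pdx (pdt v) t x := by
        rw [← fderiv_uncurry_pdt hv,
          pdx_eq_fderiv ((contDiff_pdt hv le_rfl).differentiable one_ne_zero _)]

end PartialDerivatives

noncomputable def scalingDeriv (α β : ℝ) (w : ℝ → ℝ → ℝ) : ℝ → ℝ → ℝ :=
  fun t x => α * t * pdt w t x + β * x * pdx w t x

/-- The characteristic of the point symmetry `α t ∂_t + β x ∂_x + (c w + d) ∂_w`. -/
noncomputable def scalingChar (α β c d : ℝ) (w : ℝ → ℝ → ℝ) : ℝ → ℝ → ℝ :=
  fun t x => c * w t x + d - scalingDeriv α β w t x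

section Scaling

variable {w : ℝ → ℝ → ℝ} {α β c d : ℝ}

theorem pdx_scalingChar (hw : ContDiff ℝ 2 (uncurry w)) :
    pdx (scalingChar α β c d w) = scalingChar α β (c - β) 0 (pdx w) := by
  funext t x
  have hw₀ := hw.differentiable two_ne_zero (t, x)
  have hwt := (contDiff_pdt hw le_rfl).differentiable one_ne_zero (t, x)
  have hwx := (contDiff_pdx hw le_rfl).differentiable one_ne_zero (t, x)
  have h := (((hasDerivAt_pdx hw₀).const_mul c).add_const d).sub
    (((hasDerivAt_pdx hwt).const_mul (α * t)).add
      (((hasDerivAt_id' x).const_mul β).mul (hasDerivAt_pdx hwx)))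
  refine (h.deriv : pdx (scalingChar α β c d w) t x = _).trans ?_
  simp only [scalingChar, scalingDeriv, pdt_pdx_comm hw]
  ring

theorem pdt_scalingChar (hw : ContDiff ℝ 2 (uncurry w)) :
    pdt (scalingChar α β c d w) = scalingChar α β (c - α) 0 (pdt w) := by
  funext t x
  have hw₀ := hw.differentiable two_ne_zero (t, x)
  have hwt := (contDiff_pdt hw le_rfl).differentiable one_ne_zero (t, x)
  have hwx := (contDiff_pdx hw le_rfl).differentiable one_ne_zero (t, x)
  have h := (((hasDerivAt_pdt hw₀).const_mul c).add_const d).sub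
    ((((hasDerivAt_id' t).const_mul α).mul (hasDerivAt_pdt hwt)).add
      ((hasDerivAt_pdt hwx).const_mul (β * x)))
  refine (h.deriv : pdt (scalingChar α β c d w) t x = _).trans ?_
  simp only [scalingChar, scalingDeriv, pdt_pdx_comm hw]
  ring

end Scaling

theorem isGKN.scalingDeriv_pdt {f : ℝ → ℝ} {f' : ℝ} {u : ℝ → ℝ → ℝ} {t x : ℝ} (hsol : isGKN f u)
    (hu : ContDiff ℝ 4 (uncurry u)) (hux : pdx u t x ≠ 0) (hf : HasDerivAt f f' (u t x))
    (α β : ℝ) :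
    scalingDeriv α β (pdt u) t x = scalingDeriv α β (pdx (pdx (pdx u))) t x
      - 3 * (pdx (pdx u) t x / pdx u t x) * scalingDeriv α β (pdx (pdx u)) t x
      + (3/2) * ((pdx (pdx u) t x)^2 / (pdx u t x)^2) * scalingDeriv α β (pdx u) t x
      - (f (u t x) / (pdx u t x)^2) * scalingDeriv α β (pdx u) t x
      + (f' / pdx u t x) * scalingDeriv α β u t x := by
  have hline : ∀ {n : WithTop ℕ∞} (w : ℝ → ℝ → ℝ), ContDiff ℝ n (uncurry w) → n ≠ 0 →
      HasDerivAt (fun ε => w (t + ε * (α * t)) (x + ε * (β * x))) (scalingDeriv α β w t x) 0 :=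
    fun w hw hn => hasDerivAt_comp_line (hw.differentiable hn _) _ _
  have hu₁ := contDiff_pdx (m := 3) hu (by norm_num)
  have hu₂ := contDiff_pdx (m := 2) hu₁ (by norm_num)
  have hu₃ := contDiff_pdx (m := 1) hu₂ (by norm_num)
  have hut := contDiff_pdt (m := 3) hu (by norm_num)
  have hux₀ : pdx u (t + 0 * (α * t)) (x + 0 * (β * x)) ≠ 0 := by simpa using hux
  have hf₀ : HasDerivAt f f' (u (t + 0 * (α * t)) (x + 0 * (β * x))) := by simpa using hf
  have hrhs := ((hline _ hu₃ one_ne_zero).sub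
      ((((hline _ hu₂ two_ne_zero).pow 2).const_mul (3/2)).div
        (hline _ hu₁ three_ne_zero) hux₀)).add
    ((hf₀.comp 0 (hline _ hu four_ne_zero)).div (hline _ hu₁ three_ne_zero) hux₀)
  -- the equation differentiated along the line through `(t, x)` in the scaling direction
  have hdiff := (hline _ hut three_ne_zero).unique
    (hrhs.congr_of_eventuallyEq (Filter.Eventually.of_forall fun ε => hsol _ _))
  rw [hdiff]
  simp only [zero_mul, add_zero, Function.comp, Pi.pow_apply]
  field_simp
  ring

theorem hasDerivAt_const_mul_add_rpow (C b p : ℝ) {v : ℝ} (hv : v + b ≠ 0) :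
    HasDerivAt (fun v => C * (v + b) ^ p) (p * (C * (v + b) ^ p) / (v + b)) v := by
  refine ((((hasDerivAt_id' v).add_const b).rpow_const (Or.inl hv)).const_mul C).congr_deriv ?_
  rw [Real.rpow_sub_one hv]
  ring

theorem gKN_point_symmetry_X3b_general (C a b : ℝ)
    (u : ℝ → ℝ → ℝ) (hu : ContDiff ℝ (⊤ : ℕ∞) (Function.uncurry u))
    (hux : ∀ t x, pdx u t x ≠ 0)
    (hub : ∀ t x, u t x + b > 0)
    (hsol : isGKN (fun v => C * (v + b) ^ ((2 : ℝ) - 4 * a)) u) :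
    symmDet (fun v => C * (v + b) ^ ((2 : ℝ) - 4 * a)) u
      (fun t x => (u t x + b) - 3 * a * t * pdt u t x - a * x * pdx u t x) := by
  have hu₄ : ContDiff ℝ 4 (uncurry u) := hu.of_le (WithTop.coe_le_coe.mpr le_top)
  have hu₁ : ContDiff ℝ 3 (uncurry (pdx u)) := contDiff_pdx hu₄ (by norm_num)
  have hu₂ : ContDiff ℝ 2 (uncurry (pdx (pdx u))) := contDiff_pdx hu₁ (by norm_num)
  have hP : (fun t x => (u t x + b) - 3 * a * t * pdt u t x - a * x * pdx u t x) =
      scalingChar (3 * a) a 1 b u := by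
    funext t x
    simp only [scalingChar, scalingDeriv]
    ring
  intro t x
  have hf := hasDerivAt_const_mul_add_rpow C b (2 - 4 * a) (hub t x).ne'
  rw [hP, pdt_scalingChar (hu₄.of_le (by norm_num)), pdx_scalingChar (hu₄.of_le (by norm_num)),
    pdx_scalingChar (hu₁.of_le (by norm_num)), pdx_scalingChar hu₂, hf.deriv]
  simp only [scalingChar]
  rw [hsol t x, hsol.scalingDeriv_pdt hu₄ (hux t x) hf]
  field_simp [hux t x, (hub t x).ne']
  ring

/-- Point symmetry `X₃b = 3at ∂_t + ax ∂_x + (u+b) ∂_u` of the gKN equation with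
`f(u) = C (u+b)^(2-4a)` (real power, `u+b > 0`): its characteristic
`P = (u+b) - 3at u_t - ax u_x` satisfies the symmetry determining equation. -/
theorem gKN_point_symmetry_X3b (C a b : ℝ) (hC : C ≠ 0)
    (u : ℝ → ℝ → ℝ) (hu : ContDiff ℝ (⊤ : ℕ∞) (Function.uncurry u))
    (hux : ∀ t x, pdx u t x ≠ 0)
    (hub : ∀ t x, u t x + b > 0)
    (hsol : isGKN (fun v => C * (v + b) ^ ((2 : ℝ) - 4 * a)) u) :
    symmDet (fun v => C * (v + b) ^ ((2 : ℝ) - 4 * a)) u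
      (fun t x => (u t x + b) - 3 * a * t * pdt u t x - a * x * pdx u t x) :=
  gKN_point_symmetry_X3b_general C a b u hu hux hub hsol
end

section
/- Let C ≠ 0, a, b, c be real constants with c ≠ 0, and set f(u) = C·(c+b+u)^(2+2a/c)·(c−b−u)^(2−2a/c), defined for c+b+u > 0 and c−b−u > 0. Let u(t,x) be a smooth real-valued solution of the gKN equation with f, such that u_x(t,x) ≠ 0 and |u(t,x)+b| < c for all (t,x). Then the function P(t,x) = ((u(t,x)+b)² − c²) − 3at·u_t(t,x) − ax·u_x(t,x) satisfies the symmetry determining equation ∂_t P − ∂_x³ P + 3(u_xx/u_x)∂_x² P − (3/2)(u_xx²/u_x²)∂_x P + (f(u)/u_x²)∂_x P − (f'(u)/u_x)P = 0 at every point (t,x). (This is the point symmetry X_{3d} = 3at∂_t + ax∂_x + ((u+b)²−c²)∂_u of the gKN equation.) -/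
open Real

/-! The symmetry determining operator `L` is the linearization of the gKN equation along `u`.
Differentiating the equation in `t` and in `x` shows `L u_t = 0` and `L u_x = 0`. Since
`L (t Q) = t L Q + Q` and `L (x Q) = x L Q - 3 Q_xx + 6 (u_xx/u_x) Q_x - ((3/2) u_xx²/u_x² -
f(u)/u_x²) Q`, the equation gives `L (3t u_t + x u_x) = 4 f(u)/u_x`; for `φ(u) = (u+b)² - c²`
it gives `L φ(u) = (2 φ'(u) f(u) - f'(u) φ(u))/u_x`. Hence
`L P = (4 (u+b-a) f(u) - f'(u) φ(u))/u_x`, which vanishes because the logarithmic derivative of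
`f` is `(2 + 2a/c)/(c+b+u) - (2 - 2a/c)/(c-b-u)`. -/

section Calculus

variable {E : Type*} [NormedAddCommGroup E] [NormedSpace ℝ E]

theorem DifferentiableAt.hasDerivAt_slice_fst {F : ℝ × ℝ → E} {t x : ℝ}
    (hF : DifferentiableAt ℝ F (t, x)) :
    HasDerivAt (fun s => F (s, x)) (fderiv ℝ F (t, x) (1, 0)) t :=
  hF.hasFDerivAt.comp_hasDerivAt t ((hasDerivAt_id' t).prodMk (hasDerivAt_const t x))

theorem DifferentiableAt.hasDerivAt_slice_snd {F : ℝ × ℝ → E} {t x : ℝ}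
    (hF : DifferentiableAt ℝ F (t, x)) :
    HasDerivAt (fun y => F (t, y)) (fderiv ℝ F (t, x) (0, 1)) x :=
  hF.hasFDerivAt.comp_hasDerivAt x ((hasDerivAt_const x t).prodMk (hasDerivAt_id' x))

variable {g h : ℝ → ℝ → ℝ}

theorem pdx_eq_fderiv_s3 (hg : Differentiable ℝ (Function.uncurry g)) (t x : ℝ) :
    pdx g t x = fderiv ℝ (Function.uncurry g) (t, x) (0, 1) :=
  (hg (t, x)).hasDerivAt_slice_snd.deriv

theorem pdt_eq_fderiv_s3 (hg : Differentiable ℝ (Function.uncurry g)) (t x : ℝ) :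
    pdt g t x = fderiv ℝ (Function.uncurry g) (t, x) (1, 0) :=
  (hg (t, x)).hasDerivAt_slice_fst.deriv

theorem hasDerivAt_pdx_s3 (hg : Differentiable ℝ (Function.uncurry g)) (t x : ℝ) :
    HasDerivAt (fun y => g t y) (pdx g t x) x :=
  pdx_eq_fderiv_s3 hg t x ▸ (hg (t, x)).hasDerivAt_slice_snd

theorem hasDerivAt_pdt_s3 (hg : Differentiable ℝ (Function.uncurry g)) (t x : ℝ) :
    HasDerivAt (fun s => g s x) (pdt g t x) t :=
  pdt_eq_fderiv_s3 hg t x ▸ (hg (t, x)).hasDerivAt_slice_fst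

theorem contDiff_pdx_s3 (hg : ContDiff ℝ (⊤ : ℕ∞) (Function.uncurry g)) :
    ContDiff ℝ (⊤ : ℕ∞) (Function.uncurry (pdx g)) := by
  have : Function.uncurry (pdx g) = fun p => fderiv ℝ (Function.uncurry g) p (0, 1) :=
    funext fun p => pdx_eq_fderiv_s3 (hg.differentiable (by simp)) p.1 p.2
  rw [this]
  exact (hg.fderiv_right le_rfl).clm_apply contDiff_const

theorem contDiff_pdt_s3 (hg : ContDiff ℝ (⊤ : ℕ∞) (Function.uncurry g)) :
    ContDiff ℝ (⊤ : ℕ∞) (Function.uncurry (pdt g)) := by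
  have : Function.uncurry (pdt g) = fun p => fderiv ℝ (Function.uncurry g) p (1, 0) :=
    funext fun p => pdt_eq_fderiv_s3 (hg.differentiable (by simp)) p.1 p.2
  rw [this]
  exact (hg.fderiv_right le_rfl).clm_apply contDiff_const

theorem pdt_pdx_comm_s3 (hg : ContDiff ℝ (⊤ : ℕ∞) (Function.uncurry g)) :
    pdt (pdx g) = pdx (pdt g) := by
  have hd := hg.differentiable (by simp)
  have hdd : Differentiable ℝ (fderiv ℝ (Function.uncurry g)) :=
    (hg.fderiv_right (m := 1) (WithTop.coe_le_coe.mpr le_top)).differentiable (by simp)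
  funext t x
  have ht := (hdd (t, x)).hasDerivAt_slice_fst.clm_apply (hasDerivAt_const t ((0 : ℝ), (1 : ℝ)))
  have hx := (hdd (t, x)).hasDerivAt_slice_snd.clm_apply (hasDerivAt_const x ((1 : ℝ), (0 : ℝ)))
  simp only [map_zero, add_zero] at ht hx
  rw [pdt, funext fun s => pdx_eq_fderiv_s3 hd s x, ht.deriv, pdx,
    funext fun y => pdt_eq_fderiv_s3 hd t y, hx.deriv]
  refine hg.contDiffAt.isSymmSndFDerivAt ?_ _ _
  simp only [minSmoothness_of_isRCLikeNormedField]
  exact WithTop.coe_le_coe.mpr le_top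

theorem pdx_add (hg : Differentiable ℝ (Function.uncurry g))
    (hh : Differentiable ℝ (Function.uncurry h)) : pdx (g + h) = pdx g + pdx h :=
  funext₂ fun t x => ((hasDerivAt_pdx_s3 hg t x).add (hasDerivAt_pdx_s3 hh t x)).deriv

theorem pdt_add (hg : Differentiable ℝ (Function.uncurry g))
    (hh : Differentiable ℝ (Function.uncurry h)) : pdt (g + h) = pdt g + pdt h :=
  funext₂ fun t x => ((hasDerivAt_pdt_s3 hg t x).add (hasDerivAt_pdt_s3 hh t x)).deriv

theorem pdx_smul (k : ℝ) : pdx (k • g) = k • pdx g :=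
  funext₂ fun _ _ => deriv_const_mul_field k

theorem pdt_smul (k : ℝ) : pdt (k • g) = k • pdt g :=
  funext₂ fun _ _ => deriv_const_mul_field k

end Calculus

theorem HasDerivAt.gknRhs {f : ℝ → ℝ} {v₀ v₁ v₂ v₃ : ℝ → ℝ} {f' w₀ w₁ w₂ w₃ s : ℝ}
    (h₀ : HasDerivAt v₀ w₀ s) (h₁ : HasDerivAt v₁ w₁ s) (h₂ : HasDerivAt v₂ w₂ s)
    (h₃ : HasDerivAt v₃ w₃ s) (hf : HasDerivAt f f' (v₀ s)) (hv₁ : v₁ s ≠ 0) :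
    HasDerivAt (fun s => v₃ s - (3/2) * v₂ s ^ 2 / v₁ s + f (v₀ s) / v₁ s)
      (w₃ - 3 * (v₂ s / v₁ s) * w₂ + (3/2) * (v₂ s ^ 2 / v₁ s ^ 2) * w₁
        - f (v₀ s) / v₁ s ^ 2 * w₁ + f' / v₁ s * w₀) s := by
  refine ((h₃.sub (((h₂.pow 2).const_mul (3/2)).div h₁ hv₁)).add
    ((hf.comp s h₀).div h₁ hv₁)).congr_deriv ?_
  simp only [Pi.pow_apply, Function.comp_apply]
  field_simp
  ring

/-- Linearization at `u` of the right-hand side of the gKN equation, in the direction `Q`. -/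
noncomputable def gknLinRhs (f : ℝ → ℝ) (u Q : ℝ → ℝ → ℝ) (t x : ℝ) : ℝ :=
  pdx (pdx (pdx Q)) t x - 3 * (pdx (pdx u) t x / pdx u t x) * pdx (pdx Q) t x
    + (3/2) * (pdx (pdx u) t x ^ 2 / pdx u t x ^ 2) * pdx Q t x
    - f (u t x) / pdx u t x ^ 2 * pdx Q t x + deriv f (u t x) / pdx u t x * Q t x

noncomputable def gknLin (f : ℝ → ℝ) (u Q : ℝ → ℝ → ℝ) (t x : ℝ) : ℝ :=
  pdt Q t x - gknLinRhs f u Q t x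

theorem symmDet_iff_gknLin_eq_zero {f : ℝ → ℝ} {u P : ℝ → ℝ → ℝ} :
    symmDet f u P ↔ gknLin f u P = 0 := by
  simp only [funext_iff, Pi.zero_apply]
  refine forall₂_congr fun t x => ?_
  rw [gknLin, gknLinRhs]
  constructor <;> intro h <;> linear_combination h

section Linearization

variable {f : ℝ → ℝ} {u P Q : ℝ → ℝ → ℝ}

theorem gknLin_add (hP : ContDiff ℝ (⊤ : ℕ∞) (Function.uncurry P))
    (hQ : ContDiff ℝ (⊤ : ℕ∞) (Function.uncurry Q)) :
    gknLin f u (P + Q) = gknLin f u P + gknLin f u Q := by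
  have hd {g : ℝ → ℝ → ℝ} (hg : ContDiff ℝ (⊤ : ℕ∞) (Function.uncurry g)) :=
    hg.differentiable (by simp)
  funext t x
  simp only [gknLin, gknLinRhs, pdt_add (hd hP) (hd hQ), pdx_add (hd hP) (hd hQ),
    pdx_add (hd (contDiff_pdx_s3 hP)) (hd (contDiff_pdx_s3 hQ)),
    pdx_add (hd (contDiff_pdx_s3 (contDiff_pdx_s3 hP))) (hd (contDiff_pdx_s3 (contDiff_pdx_s3 hQ))),
    Pi.add_apply]
  ring

theorem gknLin_smul (k : ℝ) : gknLin f u (k • P) = k • gknLin f u P := by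
  funext t x
  simp only [gknLin, gknLinRhs, pdt_smul, pdx_smul, Pi.smul_apply, smul_eq_mul]
  ring

theorem gknLin_time_mul (hQ : Differentiable ℝ (Function.uncurry Q)) :
    gknLin f u (fun t x => t * Q t x) = fun t x => t * gknLin f u Q t x + Q t x := by
  have hx : pdx (fun t x => t * Q t x) = fun t x => t * pdx Q t x :=
    funext₂ fun t _ => deriv_const_mul_field t
  have hxx : pdx (fun t x => t * pdx Q t x) = fun t x => t * pdx (pdx Q) t x :=
    funext₂ fun t _ => deriv_const_mul_field t
  have hxxx : pdx (fun t x => t * pdx (pdx Q) t x) = fun t x => t * pdx (pdx (pdx Q)) t x :=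
    funext₂ fun t _ => deriv_const_mul_field t
  funext t x
  have ht : pdt (fun t x => t * Q t x) t x = Q t x + t * pdt Q t x :=
    ((hasDerivAt_id' t).mul (hasDerivAt_pdt_s3 hQ t x)).deriv.trans (by ring)
  simp only [gknLin, gknLinRhs, ht, hx, hxx, hxxx]
  ring

theorem gknLin_space_mul (hQ : ContDiff ℝ (⊤ : ℕ∞) (Function.uncurry Q)) :
    gknLin f u (fun t x => x * Q t x) = fun t x => x * gknLin f u Q t x
      - (3 * pdx (pdx Q) t x - 6 * (pdx (pdx u) t x / pdx u t x) * pdx Q t x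
        + (3/2) * (pdx (pdx u) t x ^ 2 / pdx u t x ^ 2) * Q t x
        - f (u t x) / pdx u t x ^ 2 * Q t x) := by
  have hd₀ : Differentiable ℝ (Function.uncurry Q) := hQ.differentiable (by simp)
  have hd₁ := (contDiff_pdx_s3 hQ).differentiable (by simp)
  have hd₂ := (contDiff_pdx_s3 (contDiff_pdx_s3 hQ)).differentiable (by simp)
  have hx : pdx (fun t x => x * Q t x) = fun t x => Q t x + x * pdx Q t x :=
    funext₂ fun t x => ((hasDerivAt_id' x).mul (hasDerivAt_pdx_s3 hd₀ t x)).deriv.trans (by ring)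
  have hxx : pdx (fun t x => Q t x + x * pdx Q t x) =
      fun t x => 2 * pdx Q t x + x * pdx (pdx Q) t x :=
    funext₂ fun t x => ((hasDerivAt_pdx_s3 hd₀ t x).add
      ((hasDerivAt_id' x).mul (hasDerivAt_pdx_s3 hd₁ t x))).deriv.trans (by ring)
  have hxxx : pdx (fun t x => 2 * pdx Q t x + x * pdx (pdx Q) t x) =
      fun t x => 3 * pdx (pdx Q) t x + x * pdx (pdx (pdx Q)) t x :=
    funext₂ fun t x => (((hasDerivAt_pdx_s3 hd₁ t x).const_mul 2).add
      ((hasDerivAt_id' x).mul (hasDerivAt_pdx_s3 hd₂ t x))).deriv.trans (by ring)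
  have ht : pdt (fun t x => x * Q t x) = fun t x => x * pdt Q t x :=
    funext₂ fun _ x => deriv_const_mul_field x
  funext t x
  simp only [gknLin, gknLinRhs, ht, hx, hxx, hxxx]
  ring

theorem gknLin_pdt_eq_zero (hu : ContDiff ℝ (⊤ : ℕ∞) (Function.uncurry u))
    (hux : ∀ t x, pdx u t x ≠ 0) (hf : ∀ t x, DifferentiableAt ℝ f (u t x))
    (hsol : isGKN f u) : gknLin f u (pdt u) = 0 := by
  have hu₁ := contDiff_pdx_s3 hu
  have hu₂ := contDiff_pdx_s3 hu₁
  have hd {g : ℝ → ℝ → ℝ} (hg : ContDiff ℝ (⊤ : ℕ∞) (Function.uncurry g)) :=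
    hg.differentiable (by simp)
  funext t x
  have h : HasDerivAt (fun s => pdt u s x) (gknLinRhs f u (pdt u) t x) t := by
    rw [funext fun s => hsol s x]
    refine ((hasDerivAt_pdt_s3 (hd hu) t x).gknRhs (hasDerivAt_pdt_s3 (hd hu₁) t x)
      (hasDerivAt_pdt_s3 (hd hu₂) t x) (hasDerivAt_pdt_s3 (hd (contDiff_pdx_s3 hu₂)) t x)
      (hf t x).hasDerivAt (hux t x)).congr_deriv ?_
    rw [pdt_pdx_comm_s3 hu₂, pdt_pdx_comm_s3 hu₁, pdt_pdx_comm_s3 hu, gknLinRhs]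
  exact sub_eq_zero.mpr h.deriv

theorem gknLin_pdx_eq_zero (hu : ContDiff ℝ (⊤ : ℕ∞) (Function.uncurry u))
    (hux : ∀ t x, pdx u t x ≠ 0) (hf : ∀ t x, DifferentiableAt ℝ f (u t x))
    (hsol : isGKN f u) : gknLin f u (pdx u) = 0 := by
  have hu₁ := contDiff_pdx_s3 hu
  have hu₂ := contDiff_pdx_s3 hu₁
  have hd {g : ℝ → ℝ → ℝ} (hg : ContDiff ℝ (⊤ : ℕ∞) (Function.uncurry g)) :=
    hg.differentiable (by simp)
  funext t x
  have h : HasDerivAt (fun y => pdt u t y) (gknLinRhs f u (pdx u) t x) x := by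
    rw [funext fun y => hsol t y]
    exact (hasDerivAt_pdx_s3 (hd hu) t x).gknRhs (hasDerivAt_pdx_s3 (hd hu₁) t x)
      (hasDerivAt_pdx_s3 (hd hu₂) t x) (hasDerivAt_pdx_s3 (hd (contDiff_pdx_s3 hu₂)) t x)
      (hf t x).hasDerivAt (hux t x)
  rw [gknLin, pdt_pdx_comm_s3 hu]
  exact sub_eq_zero.mpr h.deriv

end Linearization

section Symmetries

variable {f : ℝ → ℝ} {u : ℝ → ℝ → ℝ}

theorem gknLin_quadratic (hu : ContDiff ℝ (⊤ : ℕ∞) (Function.uncurry u))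
    (hux : ∀ t x, pdx u t x ≠ 0) (hsol : isGKN f u) (b c : ℝ) :
    gknLin f u (fun t x => (u t x + b) ^ 2 - c ^ 2) = fun t x =>
      (4 * (u t x + b) * f (u t x) - deriv f (u t x) * ((u t x + b) ^ 2 - c ^ 2)) /
        pdx u t x := by
  have hd₀ : Differentiable ℝ (Function.uncurry u) := hu.differentiable (by simp)
  have hd₁ := (contDiff_pdx_s3 hu).differentiable (by simp)
  have hd₂ := (contDiff_pdx_s3 (contDiff_pdx_s3 hu)).differentiable (by simp)
  have hx : pdx (fun t x => (u t x + b) ^ 2 - c ^ 2) = fun t x => 2 * (u t x + b) * pdx u t x :=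
    funext₂ fun t x => ((((hasDerivAt_pdx_s3 hd₀ t x).add_const b).pow 2).sub_const _).deriv.trans
      (by ring)
  have hxx : pdx (fun t x => 2 * (u t x + b) * pdx u t x) =
      fun t x => 2 * pdx u t x ^ 2 + 2 * (u t x + b) * pdx (pdx u) t x :=
    funext₂ fun t x => ((((hasDerivAt_pdx_s3 hd₀ t x).add_const b).const_mul 2).mul
      (hasDerivAt_pdx_s3 hd₁ t x)).deriv.trans (by ring)
  have hxxx : pdx (fun t x => 2 * pdx u t x ^ 2 + 2 * (u t x + b) * pdx (pdx u) t x) =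
      fun t x => 6 * pdx u t x * pdx (pdx u) t x + 2 * (u t x + b) * pdx (pdx (pdx u)) t x :=
    funext₂ fun t x => ((((hasDerivAt_pdx_s3 hd₁ t x).pow 2).const_mul 2).add
      ((((hasDerivAt_pdx_s3 hd₀ t x).add_const b).const_mul 2).mul
        (hasDerivAt_pdx_s3 hd₂ t x))).deriv.trans (by push_cast; ring)
  have ht : pdt (fun t x => (u t x + b) ^ 2 - c ^ 2) = fun t x => 2 * (u t x + b) * pdt u t x :=
    funext₂ fun t x => ((((hasDerivAt_pdt_s3 hd₀ t x).add_const b).pow 2).sub_const _).deriv.trans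
      (by ring)
  funext t x
  have hux := hux t x
  simp only [gknLin, gknLinRhs, ht, hx, hxx, hxxx, hsol t x]
  field_simp
  ring

theorem gknLin_scaling (hu : ContDiff ℝ (⊤ : ℕ∞) (Function.uncurry u))
    (hux : ∀ t x, pdx u t x ≠ 0) (hf : ∀ t x, DifferentiableAt ℝ f (u t x))
    (hsol : isGKN f u) :
    gknLin f u (fun t x => 3 * t * pdt u t x + x * pdx u t x) =
      fun t x => 4 * f (u t x) / pdx u t x := by
  have hS : (fun t x => 3 * t * pdt u t x + x * pdx u t x) =
      (3 : ℝ) • (fun t x => t * pdt u t x) + fun t x => x * pdx u t x := by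
    funext t x
    simp only [Pi.add_apply, Pi.smul_apply, smul_eq_mul]
    ring
  have hT : ContDiff ℝ (⊤ : ℕ∞) (Function.uncurry ((3 : ℝ) • fun t x => t * pdt u t x)) :=
    (contDiff_fst.mul (contDiff_pdt_s3 hu)).const_smul (3 : ℝ)
  have hX : ContDiff ℝ (⊤ : ℕ∞) (Function.uncurry fun t x => x * pdx u t x) :=
    contDiff_snd.mul (contDiff_pdx_s3 hu)
  rw [hS, gknLin_add hT hX, gknLin_smul,
    gknLin_time_mul ((contDiff_pdt_s3 hu).differentiable (by simp)),
    gknLin_space_mul (contDiff_pdx_s3 hu), gknLin_pdt_eq_zero hu hux hf hsol,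
    gknLin_pdx_eq_zero hu hux hf hsol]
  funext t x
  have hux := hux t x
  simp only [Pi.add_apply, Pi.smul_apply, Pi.zero_apply, smul_eq_mul, hsol t x]
  field_simp
  ring

end Symmetries

noncomputable def powerNonlinearity (C a b c : ℝ) (v : ℝ) : ℝ :=
  C * (c + b + v) ^ ((2 : ℝ) + 2 * a / c) * (c - b - v) ^ ((2 : ℝ) - 2 * a / c)

theorem pos_of_abs_add_lt {v b c : ℝ} (hv : |v + b| < c) : 0 < c + b + v ∧ 0 < c - b - v := by
  constructor <;> linarith [abs_lt.mp hv]

theorem hasDerivAt_powerNonlinearity {C a b c v : ℝ} (hv : |v + b| < c) :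
    HasDerivAt (powerNonlinearity C a b c) (powerNonlinearity C a b c v *
      ((2 + 2 * a / c) / (c + b + v) - (2 - 2 * a / c) / (c - b - v))) v := by
  obtain ⟨hp, hm⟩ := pos_of_abs_add_lt hv
  refine (((((hasDerivAt_id' v).const_add (c + b)).rpow_const (.inl hp.ne')).const_mul C).mul
    (((hasDerivAt_id' v).const_sub (c - b)).rpow_const (.inl hm.ne'))).congr_deriv ?_
  rw [Real.rpow_sub_one hp.ne', Real.rpow_sub_one hm.ne', powerNonlinearity]
  ring

theorem deriv_powerNonlinearity_mul {C a b c v : ℝ} (hv : |v + b| < c) :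
    deriv (powerNonlinearity C a b c) v * ((v + b) ^ 2 - c ^ 2) =
      4 * (v + b - a) * powerNonlinearity C a b c v := by
  obtain ⟨hp, hm⟩ := pos_of_abs_add_lt hv
  have hc : c ≠ 0 := by linarith
  rw [(hasDerivAt_powerNonlinearity hv).deriv]
  field_simp
  ring

theorem gKN_point_symmetry_X3d_general (C a b c : ℝ)
    (u : ℝ → ℝ → ℝ) (hu : ContDiff ℝ (⊤ : ℕ∞) (Function.uncurry u))
    (hux : ∀ t x, pdx u t x ≠ 0)
    (hub : ∀ t x, |u t x + b| < c)
    (hsol : isGKN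
      (fun v => C * (c + b + v) ^ ((2 : ℝ) + 2 * a / c) * (c - b - v) ^ ((2 : ℝ) - 2 * a / c)) u) :
    symmDet
      (fun v => C * (c + b + v) ^ ((2 : ℝ) + 2 * a / c) * (c - b - v) ^ ((2 : ℝ) - 2 * a / c)) u
      (fun t x => ((u t x + b)^2 - c^2) - 3 * a * t * pdt u t x - a * x * pdx u t x) := by
  change isGKN (powerNonlinearity C a b c) u at hsol
  change symmDet (powerNonlinearity C a b c) u _
  have hP : (fun t x => ((u t x + b)^2 - c^2) - 3 * a * t * pdt u t x - a * x * pdx u t x) =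
      (fun t x => (u t x + b) ^ 2 - c ^ 2) +
        (-a) • fun t x => 3 * t * pdt u t x + x * pdx u t x := by
    funext t x
    simp only [Pi.add_apply, Pi.smul_apply, smul_eq_mul]
    ring
  have hΦ : ContDiff ℝ (⊤ : ℕ∞) (Function.uncurry fun t x => (u t x + b) ^ 2 - c ^ 2) :=
    ((hu.add contDiff_const).pow 2).sub contDiff_const
  have hS : ContDiff ℝ (⊤ : ℕ∞)
      (Function.uncurry ((-a) • fun t x => 3 * t * pdt u t x + x * pdx u t x)) :=
    (((contDiff_const.mul contDiff_fst).mul (contDiff_pdt_s3 hu)).add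
      (contDiff_snd.mul (contDiff_pdx_s3 hu))).const_smul (-a)
  have hf t x := (hasDerivAt_powerNonlinearity (C := C) (a := a) (hub t x)).differentiableAt
  rw [symmDet_iff_gknLin_eq_zero, hP, gknLin_add hΦ hS, gknLin_smul,
    gknLin_quadratic hu hux hsol, gknLin_scaling hu hux hf hsol]
  funext t x
  have hux := hux t x
  simp only [Pi.add_apply, Pi.smul_apply, Pi.zero_apply, smul_eq_mul]
  field_simp
  linear_combination -deriv_powerNonlinearity_mul (C := C) (a := a) (hub t x)

/-- Point symmetry `X₃d = 3at ∂_t + ax ∂_x + ((u+b)²-c²) ∂_u` of the gKN equation with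
`f(u) = C (c+b+u)^(2+2a/c) (c-b-u)^(2-2a/c)` (real powers, `|u+b| < c`): its
characteristic `P = ((u+b)²-c²) - 3at u_t - ax u_x` satisfies the symmetry
determining equation. -/
theorem gKN_point_symmetry_X3d (C a b c : ℝ) (hC : C ≠ 0) (hc : c ≠ 0)
    (u : ℝ → ℝ → ℝ) (hu : ContDiff ℝ (⊤ : ℕ∞) (Function.uncurry u))
    (hux : ∀ t x, pdx u t x ≠ 0)
    (hub : ∀ t x, |u t x + b| < c)
    (hsol : isGKN
      (fun v => C * (c + b + v) ^ ((2 : ℝ) + 2 * a / c) * (c - b - v) ^ ((2 : ℝ) - 2 * a / c)) u) :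
    symmDet
      (fun v => C * (c + b + v) ^ ((2 : ℝ) + 2 * a / c) * (c - b - v) ^ ((2 : ℝ) - 2 * a / c)) u
      (fun t x => ((u t x + b)^2 - c^2) - 3 * a * t * pdt u t x - a * x * pdx u t x) :=
  gKN_point_symmetry_X3d_general C a b c u hu hux hub hsol
end
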